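/- arXiv:2308.02127 — 2 statements merged into one kernel-verified Lean document; each statement's English description precedes it below -/
import Mathlib

section
/- Let F_n be the friendship graph on 2n+1 vertices with n ≥ 2. Then γ_tc(M(F_n)) = 2n + 1. -/
open SimpleGraph

/-- The middle graph `M(G)`: vertices are `V(G) ⊕ E(G)`; an edge-vertex is adjacent to
another edge-vertex iff the edges are distinct and share an endpoint, and a vertex is
adjacent to an edge iff it is incident to it. -/
def middleGraph {V : Type*} (G : SimpleGraph V) : SimpleGraph (V ⊕ G.edgeSet) where
  Adj x y :=
    match x, y with
    | Sum.inl _, Sum.inl _ => False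
    | Sum.inl v, Sum.inr e => v ∈ (e : Sym2 V)
    | Sum.inr e, Sum.inl v => v ∈ (e : Sym2 V)
    | Sum.inr e, Sum.inr f => e ≠ f ∧ ∃ v, v ∈ (e : Sym2 V) ∧ v ∈ (f : Sym2 V)
  symm := by
    constructor
    rintro (v|e) (w|f) h
    · exact h
    · exact h
    · exact h
    · exact ⟨h.1.symm, h.2.imp fun v hv => ⟨hv.2, hv.1⟩⟩
  loopless := by
    constructor
    rintro (v|e) h
    · exact h
    · exact h.1 rfl

/-- `D` is a total dominating set of `G`: every vertex has a neighbour in `D`. -/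
def IsTotalDomSet {V : Type*} (G : SimpleGraph V) (D : Set V) : Prop :=
  ∀ v : V, ∃ u ∈ D, G.Adj v u

/-- `D` is a total outer-connected dominating set of `G`: it is total dominating and
the subgraph induced on the complement of `D` is connected. -/
def IsTOCDomSet {V : Type*} (G : SimpleGraph V) (D : Set V) : Prop :=
  IsTotalDomSet G D ∧ (G.induce Dᶜ).Connected

/-- The total domination number `γₜ(G)`. -/
noncomputable def totalDomNum {V : Type*} (G : SimpleGraph V) : ℕ :=
  sInf {k | ∃ D : Set V, IsTotalDomSet G D ∧ D.ncard = k}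

/-- The total outer-connected domination number `γ_tc(G)`. -/
noncomputable def tocDomNum {V : Type*} (G : SimpleGraph V) : ℕ :=
  sInf {k | ∃ D : Set V, IsTOCDomSet G D ∧ D.ncard = k}

/-- The set of leaves (vertices of degree 1) of `G`. -/
def leafSet {V : Type*} (G : SimpleGraph V) : Set V :=
  {v | ∃ u, G.neighborSet v = {u}}

/-- The wheel graph with hub `none` and rim cycle on `Fin n`. -/
def wheelGraph (n : ℕ) : SimpleGraph (Option (Fin n)) where
  Adj x y :=
    match x, y with
    | none, none => False
    | none, some _ => True
    | some _, none => True
    | some i, some j => (SimpleGraph.cycleGraph n).Adj i j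
  symm := by
    constructor
    rintro (_|i) (_|j) h
    · exact h
    · exact h
    · exact h
    · exact (SimpleGraph.cycleGraph n).adj_symm h
  loopless := by
    constructor
    rintro (_|i) h
    · exact h
    · exact (SimpleGraph.cycleGraph n).loopless.irrefl i h

/-- The corona `G ∘ K₁`: to each vertex `a` of `G` (copy `Sum.inl a`) a pendant
vertex `Sum.inr a` is attached. -/
def corona {V : Type*} (G : SimpleGraph V) : SimpleGraph (V ⊕ V) where
  Adj x y :=
    match x, y with
    | Sum.inl a, Sum.inl b => G.Adj a b
    | Sum.inl a, Sum.inr b => a = b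
    | Sum.inr a, Sum.inl b => a = b
    | Sum.inr _, Sum.inr _ => False
  symm := by
    constructor
    rintro (a|a) (b|b) h
    · exact G.adj_symm h
    · exact h.symm
    · exact h.symm
    · exact h
  loopless := by
    constructor
    rintro (a|a) h
    · exact G.loopless.irrefl a h
    · exact h

/-- The 2-corona `G ∘ P₂`: to each vertex `a` of `G` (copy `Sum.inl a`) a path
`Sum.inl a — Sum.inr (Sum.inl a) — Sum.inr (Sum.inr a)` of length 2 is attached. -/
def corona2 {V : Type*} (G : SimpleGraph V) : SimpleGraph (V ⊕ V ⊕ V) where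
  Adj x y :=
    match x, y with
    | Sum.inl a, Sum.inl b => G.Adj a b
    | Sum.inl a, Sum.inr (Sum.inl b) => a = b
    | Sum.inr (Sum.inl a), Sum.inl b => a = b
    | Sum.inr (Sum.inl a), Sum.inr (Sum.inr b) => a = b
    | Sum.inr (Sum.inr a), Sum.inr (Sum.inl b) => a = b
    | _, _ => False
  symm := by
    constructor
    rintro (a|a|a) (b|b|b) h <;> first | exact G.symm h | exact h.symm | exact h
  loopless := by
    constructor
    rintro (a|a|a) h
    · exact G.loopless.irrefl a h
    · exact h
    · exact h

/-- The spider `S_{1,n,n}`: hub `none`, middle vertices `some (.inl i)`,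
leaves `some (.inr i)`; the star `K_{1,n}` with every edge subdivided once. -/
def spiderGraph (n : ℕ) : SimpleGraph (Option (Fin n ⊕ Fin n)) where
  Adj x y :=
    match x, y with
    | none, some (Sum.inl _) => True
    | some (Sum.inl _), none => True
    | some (Sum.inl i), some (Sum.inr j) => i = j
    | some (Sum.inr i), some (Sum.inl j) => i = j
    | _, _ => False
  symm := by
    constructor
    rintro (_|i|i) (_|j|j) h <;> first | exact h.symm | exact h
  loopless := by
    constructor
    rintro (_|i|i) h <;> exact h

/-- The friendship graph `Fₙ`: `n` triangles sharing the common vertex `none`. -/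
def friendshipGraph (n : ℕ) : SimpleGraph (Option (Fin n × Fin 2)) where
  Adj x y :=
    match x, y with
    | none, some _ => True
    | some _, none => True
    | some (i, a), some (j, b) => i = j ∧ a ≠ b
    | none, none => False
  symm := by
    constructor
    rintro (_|⟨i,a⟩) (_|⟨j,b⟩) h <;> first | exact ⟨h.1.symm, h.2.symm⟩ | exact h
  loopless := by
    constructor
    rintro (_|⟨i,a⟩) h
    · exact h
    · exact h.2 rfl

/-!
Write `v_{i,a}` (`a = 0, 1`) for the outer vertices of the `i`-th triangle of `F_n`, `s_{i,a}` for
its spokes `v₀v_{i,a}` and `r_i` for its rim `v_{i,0}v_{i,1}`. In `M(F_n)` the five vertices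
`v_{i,0}, v_{i,1}, s_{i,0}, s_{i,1}, r_i` form the `i`-th fiber, and only the spokes have neighbours
outside it. A total dominating set `D` meets every fiber at least twice, since `v_{i,0}` and
`v_{i,1}` need dominators in `{s_{i,0}, r_i}` and `{s_{i,1}, r_i}`, and if both are `r_i` then `r_i`
needs a dominator as well. If `v₀ ∉ D`, then `v₀` is dominated by some `s_{i,a} ∈ D`, and the fiber
`i` meets `D` a third time: otherwise it contains a nonempty part of `M(F_n) - D` with no edge to
`v₀`. Hence `|D| ≥ 2n + 1`. Conversely, the `v_{i,0}`, the `r_i` and one spoke `s_{i₀,0}` form a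
total dominating set whose complement is joined to `v₀` through the remaining spokes.
-/

theorem tocDomNum_eq_of_forall_le {V : Type*} {G : SimpleGraph V} {D₀ : Set V} {k : ℕ}
    (h₀ : IsTOCDomSet G D₀) (hk : D₀.ncard = k) (hle : ∀ D, IsTOCDomSet G D → k ≤ D.ncard) :
    tocDomNum G = k :=
  le_antisymm (Nat.sInf_le ⟨D₀, h₀, hk⟩)
    (le_csInf ⟨k, D₀, h₀, hk⟩ (by rintro _ ⟨D, hD, rfl⟩; exact hle D hD))

theorem SimpleGraph.Connected.mem_of_closed_under_adj {V : Type*} {G : SimpleGraph V}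
    {s S : Set V} (hconn : (G.induce s).Connected)
    (hS : ∀ x ∈ s, ∀ y ∈ s, G.Adj x y → x ∈ S → y ∈ S) {u v : V} (hu : u ∈ s) (hv : v ∈ s)
    (huS : u ∈ S) : v ∈ S := by
  by_contra hvS
  obtain ⟨p⟩ := hconn.preconnected ⟨u, hu⟩ ⟨v, hv⟩
  obtain ⟨d, -, hd, hd'⟩ := p.exists_boundary_dart {x | x.1 ∈ S} huS hvS
  exact hd' (hS _ d.fst.2 _ d.snd.2 d.adj hd)

section middleGraph

variable {V : Type*} {G : SimpleGraph V}

@[simp] theorem middleGraph_adj_inl_inl {v w : V} : ¬(middleGraph G).Adj (.inl v) (.inl w) :=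
  id

@[simp] theorem middleGraph_adj_inl_inr {v : V} {e : G.edgeSet} :
    (middleGraph G).Adj (.inl v) (.inr e) ↔ v ∈ (e : Sym2 V) := Iff.rfl

@[simp] theorem middleGraph_adj_inr_inl {v : V} {e : G.edgeSet} :
    (middleGraph G).Adj (.inr e) (.inl v) ↔ v ∈ (e : Sym2 V) := Iff.rfl

@[simp] theorem middleGraph_adj_inr_inr {e f : G.edgeSet} :
    (middleGraph G).Adj (.inr e) (.inr f) ↔ e ≠ f ∧ ∃ v, v ∈ (e : Sym2 V) ∧ v ∈ (f : Sym2 V) :=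
  Iff.rfl

end middleGraph

namespace friendshipGraph

variable {n : ℕ} {i j : Fin n} {a b : Fin 2}

def spoke (i : Fin n) (a : Fin 2) : (friendshipGraph n).edgeSet :=
  ⟨s(none, some (i, a)), trivial⟩

def rim (i : Fin n) : (friendshipGraph n).edgeSet :=
  ⟨s(some (i, 0), some (i, 1)), rfl, by decide⟩

@[simp] theorem mem_spoke {v : Option (Fin n × Fin 2)} :
    v ∈ (spoke i a : Sym2 _) ↔ v = none ∨ v = some (i, a) := Sym2.mem_iff

@[simp] theorem mem_rim {v : Option (Fin n × Fin 2)} :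
    v ∈ (rim i : Sym2 _) ↔ v = some (i, 0) ∨ v = some (i, 1) := Sym2.mem_iff

@[simp] theorem spoke_inj : spoke i a = spoke j b ↔ i = j ∧ a = b := by
  simp [spoke, Subtype.ext_iff]

@[simp] theorem rim_inj : rim i = rim j ↔ i = j := by
  simp [rim, Subtype.ext_iff]

@[simp] theorem spoke_ne_rim : spoke i a ≠ rim j := by
  simp [spoke, rim, Subtype.ext_iff]

@[simp] theorem rim_ne_spoke : rim j ≠ spoke i a := spoke_ne_rim.symm

theorem edge_eq_spoke_or_rim (e : (friendshipGraph n).edgeSet) :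
    (∃ i a, e = spoke i a) ∨ ∃ i, e = rim i := by
  obtain ⟨e, he⟩ := e
  induction e using Sym2.ind with
  | _ x y =>
    rcases x with _ | ⟨i, a⟩ <;> rcases y with _ | ⟨j, b⟩
    · exact he.elim
    · exact .inl ⟨j, b, rfl⟩
    · exact .inl ⟨i, a, Subtype.ext Sym2.eq_swap⟩
    · obtain ⟨rfl, hab⟩ := he
      right
      refine ⟨i, Subtype.ext ?_⟩
      fin_cases a <;> fin_cases b <;> first | exact absurd rfl hab | rfl | exact Sym2.eq_swap

theorem eq_spoke_of_adj_hub {w} (h : (middleGraph (friendshipGraph n)).Adj (.inl none) w) :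
    ∃ i a, w = .inr (spoke i a) := by
  rcases w with v | e
  · simp at h
  · rcases edge_eq_spoke_or_rim e with ⟨i, a, rfl⟩ | ⟨i, rfl⟩
    · exact ⟨i, a, rfl⟩
    · simp at h

theorem eq_of_adj_outer {w} (h : (middleGraph (friendshipGraph n)).Adj (.inl (some (i, a))) w) :
    w = .inr (spoke i a) ∨ w = .inr (rim i) := by
  rcases w with v | e
  · simp at h
  · rcases edge_eq_spoke_or_rim e with ⟨j, b, rfl⟩ | ⟨j, rfl⟩ <;> simp at h ⊢ <;> grind

theorem eq_of_adj_rim {w} (h : (middleGraph (friendshipGraph n)).Adj (.inr (rim i)) w) :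
    w = .inl (some (i, 0)) ∨ w = .inl (some (i, 1)) ∨
      w = .inr (spoke i 0) ∨ w = .inr (spoke i 1) := by
  rcases w with v | e
  · simpa using h
  · rcases edge_eq_spoke_or_rim e with ⟨j, b, rfl⟩ | ⟨j, rfl⟩ <;> simp at h ⊢
    grind

/-- The hub `v₀` is sent to `⊥`, so that an edge lies in the larger triangle of its endpoints. -/
def triangle : Option (Fin n × Fin 2) ⊕ (friendshipGraph n).edgeSet → WithBot (Fin n)
  | .inl v => WithBot.map Prod.fst v
  | .inr e => (e.1.map (WithBot.map Prod.fst)).sup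

@[simp] theorem triangle_hub : triangle (.inl none : Option (Fin n × Fin 2) ⊕ _) = ⊥ := rfl

@[simp] theorem triangle_outer :
    triangle (.inl (some (i, a)) : _ ⊕ (friendshipGraph n).edgeSet) = i := rfl

@[simp] theorem triangle_spoke : triangle (.inr (spoke i a)) = i :=
  bot_sup_eq (i : WithBot (Fin n))

@[simp] theorem triangle_rim : triangle (.inr (rim i)) = i :=
  sup_idem (i : WithBot (Fin n))

theorem triangle_of_adj_outer {w}
    (h : (middleGraph (friendshipGraph n)).Adj (.inl (some (i, a))) w) :
    triangle w = i := by
  rcases eq_of_adj_outer h with rfl | rfl <;> simp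

theorem triangle_of_adj_rim {w} (h : (middleGraph (friendshipGraph n)).Adj (.inr (rim i)) w) :
    triangle w = i := by
  rcases eq_of_adj_rim h with rfl | rfl | rfl | rfl <;> simp

section LowerBound

open Classical Finset

variable {D : Set (Option (Fin n × Fin 2) ⊕ (friendshipGraph n).edgeSet)}

noncomputable def fiber (D : Set (Option (Fin n × Fin 2) ⊕ (friendshipGraph n).edgeSet))
    (t : WithBot (Fin n)) : Finset (Option (Fin n × Fin 2) ⊕ (friendshipGraph n).edgeSet) :=
  {w ∈ D.toFinset | triangle w = t}

@[simp] theorem mem_fiber {t w} : w ∈ fiber D t ↔ w ∈ D ∧ triangle w = t := by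
  simp [fiber]

theorem two_le_card_fiber (hD : IsTotalDomSet (middleGraph (friendshipGraph n)) D) (i : Fin n) :
    2 ≤ #(fiber D i) := by
  obtain ⟨u, hu, hadj⟩ := hD (.inl (some (i, 1)))
  rcases eq_of_adj_outer hadj with rfl | rfl
  · obtain ⟨u', hu', hadj'⟩ := hD (.inl (some (i, 0)))
    refine one_lt_card.2 ⟨_, mem_fiber.2 ⟨hu', triangle_of_adj_outer hadj'⟩, _,
      mem_fiber.2 ⟨hu, triangle_spoke⟩, ?_⟩
    rcases eq_of_adj_outer hadj' with rfl | rfl <;> simp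
  · obtain ⟨z, hz, hadj'⟩ := hD (.inr (rim i))
    exact one_lt_card.2 ⟨_, mem_fiber.2 ⟨hu, triangle_rim⟩, z,
      mem_fiber.2 ⟨hz, triangle_of_adj_rim hadj'⟩, hadj'.ne⟩

theorem three_le_card_fiber (hD : IsTOCDomSet (middleGraph (friendshipGraph n)) D)
    (hhub : .inl none ∉ D) (hs : .inr (spoke i a) ∈ D) : 3 ≤ #(fiber D i) := by
  obtain ⟨hdom, hconn⟩ := hD
  have subset_of_closed (S : Set _)
      (hS : ∀ x ∈ Dᶜ, ∀ y ∈ Dᶜ, (middleGraph (friendshipGraph n)).Adj x y → x ∈ S → y ∈ S)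
      (hhubS : .inl none ∉ S) : S ⊆ D := fun u huS => by
    by_contra hu
    exact hhubS (hconn.mem_of_closed_under_adj hS hu hhub huS)
  by_cases hr : .inr (rim i) ∈ D
  · by_cases ho : .inl (some (i, a)) ∈ D
    · refine two_lt_card.2 ⟨_, mem_fiber.2 ⟨hs, triangle_spoke⟩, _, mem_fiber.2 ⟨hr, triangle_rim⟩,
        _, mem_fiber.2 ⟨ho, triangle_outer⟩, ?_⟩
      simp
    · refine absurd (subset_of_closed {.inl (some (i, a))} ?_ (by simp) rfl) ho
      rintro x - y hy hxy rfl
      rcases eq_of_adj_outer hxy with rfl | rfl <;> contradiction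
  · have hspoke (b : Fin 2) : .inr (spoke i b) ∈ D := by
      obtain ⟨u, hu, hadj⟩ := hdom (.inl (some (i, b)))
      rcases eq_of_adj_outer hadj with rfl | rfl
      exacts [hu, absurd hu hr]
    by_cases ho : .inl (some (i, 0)) ∈ D
    · refine two_lt_card.2 ⟨_, mem_fiber.2 ⟨hspoke 0, triangle_spoke⟩, _,
        mem_fiber.2 ⟨hspoke 1, triangle_spoke⟩, _, mem_fiber.2 ⟨ho, triangle_outer⟩, ?_⟩
      simp
    · refine absurd (subset_of_closed {.inl (some (i, 0)), .inl (some (i, 1)), .inr (rim i)} ?_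
        (by simp) (by simp)) ho
      rintro x - y hy hxy (rfl | rfl | rfl)
      · rcases eq_of_adj_outer hxy with rfl | rfl
        exacts [absurd (hspoke 0) hy, by simp]
      · rcases eq_of_adj_outer hxy with rfl | rfl
        exacts [absurd (hspoke 1) hy, by simp]
      · rcases eq_of_adj_rim hxy with rfl | rfl | rfl | rfl
        exacts [by simp, by simp, absurd (hspoke 0) hy, absurd (hspoke 1) hy]

theorem two_mul_add_one_le_ncard (hD : IsTOCDomSet (middleGraph (friendshipGraph n)) D) :
    2 * n + 1 ≤ D.ncard := by
  have hsum : D.ncard = #(fiber D ⊥) + ∑ i : Fin n, #(fiber D i) := by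
    rw [Set.ncard_eq_toFinset_card',
      card_eq_sum_card_fiberwise (f := triangle) (t := univ) (by simp)]
    exact Fintype.sum_option _
  have hconst : ∑ _i : Fin n, 2 = 2 * n := by simp [mul_comm]
  have htwo : ∑ _i : Fin n, 2 ≤ ∑ i : Fin n, #(fiber D i) :=
    sum_le_sum fun i _ => two_le_card_fiber hD.1 i
  by_cases hhub : .inl none ∈ D
  · have : 0 < #(fiber D ⊥) := card_pos.2 ⟨_, mem_fiber.2 ⟨hhub, triangle_hub⟩⟩
    omega
  · obtain ⟨u, hu, hadj⟩ := hD.1 (.inl none)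
    obtain ⟨i, a, rfl⟩ := eq_spoke_of_adj_hub hadj
    have : ∑ _i : Fin n, 2 < ∑ i : Fin n, #(fiber D i) :=
      sum_lt_sum (fun j _ => two_le_card_fiber hD.1 j)
        ⟨i, mem_univ _, three_le_card_fiber hD hhub hu⟩
    omega

end LowerBound

def witness (i₀ : Fin n) :
    Fin n ⊕ Fin n ⊕ Unit → Option (Fin n × Fin 2) ⊕ (friendshipGraph n).edgeSet
  | .inl i => .inl (some (i, 0))
  | .inr (.inl i) => .inr (rim i)
  | .inr (.inr ()) => .inr (spoke i₀ 0)

theorem ncard_range_witness (i₀ : Fin n) : (Set.range (witness i₀)).ncard = 2 * n + 1 := by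
  have hinj : Function.Injective (witness i₀) := by
    rintro (i | i | ⟨⟩) (j | j | ⟨⟩) h <;> simp_all [witness]
  rw [Set.ncard_range_of_injective hinj]
  simp
  omega

theorem isTOCDomSet_range_witness (i₀ : Fin n) :
    IsTOCDomSet (middleGraph (friendshipGraph n)) (Set.range (witness i₀)) := by
  constructor
  · rintro ((_ | ⟨i, a⟩) | e)
    · exact ⟨_, ⟨.inr (.inr ()), rfl⟩, by simp [witness]⟩
    · exact ⟨_, ⟨.inr (.inl i), rfl⟩, by fin_cases a <;> simp [witness]⟩
    · rcases edge_eq_spoke_or_rim e with ⟨i, a, rfl⟩ | ⟨i, rfl⟩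
      · exact ⟨_, ⟨.inr (.inl i), rfl⟩, by fin_cases a <;> simp [witness]⟩
      · exact ⟨_, ⟨.inl i, rfl⟩, by simp [witness]⟩
  · refine (connected_iff_exists_forall_reachable _).2 ⟨⟨.inl none, by simp [witness]⟩, ?_⟩
    rintro ⟨(_ | ⟨i, a⟩) | e, hw⟩
    · rfl
    · fin_cases a
      · simp [witness] at hw
      · have hs : .inr (spoke i 1) ∈ (Set.range (witness i₀))ᶜ := by simp [witness]
        exact (Adj.reachable (v := ⟨_, hs⟩) (by simp)).trans (Adj.reachable (by simp))
    · rcases edge_eq_spoke_or_rim e with ⟨i, a, rfl⟩ | ⟨i, rfl⟩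
      · exact Adj.reachable (by simp)
      · simp [witness] at hw

end friendshipGraph

theorem stmt18 (n : ℕ) (hn : 2 ≤ n) :
    tocDomNum (middleGraph (friendshipGraph n)) = 2 * n + 1 :=
  tocDomNum_eq_of_forall_le (friendshipGraph.isTOCDomSet_range_witness ⟨0, by omega⟩)
    (friendshipGraph.ncard_range_witness _) fun _ => friendshipGraph.two_mul_add_one_le_ncard
end

section
/- Let G be a connected graph of order n ≥ 4 with m edges such that the complement Ḡ is also connected. Then 2|Leaf(G)| + 2|Leaf(Ḡ)| ≤ γ_tc(M(G)) + γ_tc(M(Ḡ)) ≤ (n² + 3n − 4)/2. -/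
open SimpleGraph

/-!
Every leaf `v` of `G` has exactly one neighbour in `M(G)`, its pendant edge, so every total
dominating set of `M(G)` contains all pendant edges, and for `n ≥ 3` distinct leaves have distinct
pendant edges. If moreover all leaves lie in `D`, this gives `2 |Leaf(G)|` elements; otherwise a
leaf outside `D` is isolated in `M(G) − D`, which forces `D` to be everything but that leaf, and
`n + m - 1 ≥ 2 |Leaf(G)|` because some vertex is not a leaf and the pendant edges are distinct.
Conversely, all of `M(G)` except a single vertex of `G` is a total outer-connected dominating set,
so `γ_tc(M(G)) ≤ n + m - 1`; adding this for `G` and `Ḡ`, whose edge counts sum to `n(n-1)/2`,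
gives the upper bound.
-/

namespace SimpleGraph

variable {V W : Type*}

lemma Preconnected.mem_of_forall_adj_mem {G : SimpleGraph V} (hG : G.Preconnected) {S : Set V}
    (hS : ∀ a ∈ S, ∀ b, G.Adj a b → b ∈ S) {a : V} (ha : a ∈ S) (b : V) : b ∈ S := by
  obtain ⟨p⟩ := hG a b
  induction p with
  | nil => exact ha
  | cons h _ ih => exact ih (hS _ ha _ h)

lemma eq_singleton_of_induce_connected {H : SimpleGraph W} {S : Set W}
    (hS : (H.induce S).Connected) {x : W} (hx : x ∈ S) (hiso : Disjoint (H.neighborSet x) S) :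
    S = {x} := by
  refine Set.eq_singleton_iff_unique_mem.mpr ⟨hx, fun y hy => by_contra fun hyx => ?_⟩
  have : Nontrivial S := ⟨⟨⟨y, hy⟩, ⟨x, hx⟩, fun h => hyx (congrArg Subtype.val h)⟩⟩
  obtain ⟨z, hz⟩ := hS.preconnected.exists_adj_of_nontrivial ⟨x, hx⟩
  exact Set.disjoint_left.mp hiso (show H.Adj x z from hz) z.2

section Leaves

variable {G : SimpleGraph V} {v : V}

-- an arbitrary vertex when `v` is not a leaf
noncomputable def leafNeighbor (G : SimpleGraph V) (v : V) : V :=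
  haveI : Nonempty V := ⟨v⟩
  Classical.epsilon fun u => G.neighborSet v = {u}

lemma neighborSet_eq_leafNeighbor (hv : v ∈ leafSet G) :
    G.neighborSet v = {G.leafNeighbor v} :=
  Classical.epsilon_spec hv

lemma adj_iff_eq_leafNeighbor (hv : v ∈ leafSet G) {u : V} : G.Adj v u ↔ u = G.leafNeighbor v :=
  Set.ext_iff.mp (neighborSet_eq_leafNeighbor hv) u

lemma adj_leafNeighbor (hv : v ∈ leafSet G) : G.Adj v (G.leafNeighbor v) :=
  (adj_iff_eq_leafNeighbor hv).mpr rfl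

/-- Two adjacent leaves form a connected component, hence all of a connected graph. -/
lemma leafNeighbor_notMem_leafSet [Finite V] (hG : G.Connected) (hn : 3 ≤ Nat.card V)
    (hv : v ∈ leafSet G) : G.leafNeighbor v ∉ leafSet G := by
  intro hu
  set u := G.leafNeighbor v
  have hvu : v = G.leafNeighbor u := (adj_iff_eq_leafNeighbor hu).mp (adj_leafNeighbor hv).symm
  have hclosed : ∀ a ∈ ({v, u} : Set V), ∀ b, G.Adj a b → b ∈ ({v, u} : Set V) := by
    rintro a (rfl | rfl) b hab
    · exact Or.inr ((adj_iff_eq_leafNeighbor hv).mp hab)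
    · exact Or.inl (((adj_iff_eq_leafNeighbor hu).mp hab).trans hvu.symm)
  have huniv : ({v, u} : Set V) = Set.univ :=
    Set.eq_univ_of_forall (hG.preconnected.mem_of_forall_adj_mem hclosed (Set.mem_insert v _))
  have := Set.ncard_insert_le v {u}
  rw [huniv, Set.ncard_univ, Set.ncard_singleton] at this
  omega

lemma exists_notMem_leafSet [Finite V] (hG : G.Connected) (hn : 3 ≤ Nat.card V) :
    ∃ z, z ∉ leafSet G := by
  obtain ⟨v⟩ := hG.nonempty
  by_cases hv : v ∈ leafSet G
  · exact ⟨_, leafNeighbor_notMem_leafSet hG hn hv⟩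
  · exact ⟨v, hv⟩

lemma ncard_leafSet_lt [Finite V] (hG : G.Connected) (hn : 3 ≤ Nat.card V) :
    (leafSet G).ncard < Nat.card V := by
  obtain ⟨z, hz⟩ := exists_notMem_leafSet hG hn
  exact Set.ncard_lt_card fun h => hz (h ▸ Set.mem_univ z)

noncomputable def pendantEdge (v : leafSet G) : G.edgeSet :=
  ⟨s(v, G.leafNeighbor v), adj_leafNeighbor v.2⟩

lemma pendantEdge_injective [Finite V] (hG : G.Connected) (hn : 3 ≤ Nat.card V) :
    Function.Injective (pendantEdge (G := G)) := by
  rintro ⟨v, hv⟩ ⟨w, hw⟩ h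
  rcases Sym2.eq_iff.mp (congrArg Subtype.val h) with ⟨hvw, -⟩ | ⟨hvw, -⟩
  · exact Subtype.ext hvw
  · exact absurd (hvw ▸ hv) (leafNeighbor_notMem_leafSet hG hn hw)

lemma ncard_leafSet_le_ncard_edgeSet [Finite V] (hG : G.Connected) (hn : 3 ≤ Nat.card V) :
    (leafSet G).ncard ≤ G.edgeSet.ncard := by
  rw [← Nat.card_coe_set_eq, ← Nat.card_coe_set_eq]
  exact Nat.card_le_card_of_injective _ (pendantEdge_injective hG hn)

end Leaves

lemma ncard_edgeSet_add_ncard_edgeSet_compl [Finite V] (G : SimpleGraph V) :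
    G.edgeSet.ncard + Gᶜ.edgeSet.ncard = (Nat.card V).choose 2 := by
  classical
  have := Fintype.ofFinite V
  rw [← Set.ncard_union_eq (disjoint_edgeSet.mpr disjoint_compl_right),
    ← edgeSet_sup, sup_compl_eq_top, ← Nat.card_coe_set_eq, Nat.card_eq_fintype_card,
    ← edgeFinset_card, card_edgeFinset_top_eq_card_choose_two, Nat.card_eq_fintype_card]

end SimpleGraph

section Domination

variable {W : Type*} {H : SimpleGraph W} {D : Set W}

lemma IsTotalDomSet.mem_of_neighborSet_eq_singleton (hD : IsTotalDomSet H D) {x y : W}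
    (hxy : H.neighborSet x = {y}) : y ∈ D := by
  obtain ⟨u, hu, hxu⟩ := hD x
  rwa [show u = y from Set.ext_iff.mp hxy u |>.mp hxu] at hu

lemma tocDomNum_le (hD : IsTOCDomSet H D) : tocDomNum H ≤ D.ncard :=
  Nat.sInf_le ⟨D, hD, rfl⟩

lemma le_tocDomNum {k : ℕ} (hne : ∃ D, IsTOCDomSet H D)
    (hle : ∀ D, IsTOCDomSet H D → k ≤ D.ncard) : k ≤ tocDomNum H := by
  obtain ⟨D, hD⟩ := hne
  refine le_csInf ⟨_, D, hD, rfl⟩ ?_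
  rintro _ ⟨D', hD', rfl⟩
  exact hle D' hD'

end Domination

section MiddleGraph

variable {V : Type*} {G : SimpleGraph V}

lemma middleGraph_neighborSet_inl_of_mem_leafSet (v : leafSet G) :
    (middleGraph G).neighborSet (Sum.inl v) = {Sum.inr (pendantEdge v)} := by
  ext (w | ⟨e, he⟩)
  · simp [middleGraph]
  · suffices v.1 ∈ e ↔ ⟨e, he⟩ = pendantEdge v by simpa [middleGraph]
    constructor
    · intro hve
      obtain ⟨w, rfl⟩ := Sym2.mem_iff_exists.mp hve
      obtain rfl : w = G.leafNeighbor v := (adj_iff_eq_leafNeighbor v.2).mp he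
      rfl
    · rintro ⟨⟩
      exact Sym2.mem_mk_left _ _

lemma isTOCDomSet_compl_singleton_inl (hG : ∀ v, ∃ u, G.Adj v u) (v₀ : V) :
    IsTOCDomSet (middleGraph G) {Sum.inl v₀}ᶜ := by
  refine ⟨?_, by rw [compl_compl]; exact (connected_iff _).mpr ⟨.of_subsingleton, inferInstance⟩⟩
  rintro (w | ⟨e, he⟩)
  · obtain ⟨u, hwu⟩ := hG w
    exact ⟨Sum.inr ⟨s(w, u), hwu⟩, by simp, Sym2.mem_mk_left w u⟩
  · induction e using Sym2.ind with
    | _ a b =>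
      by_cases ha : a = v₀
      · refine ⟨Sum.inl b, ?_, Sym2.mem_mk_right a b⟩
        simpa [← ha] using (G.mem_edgeSet.mp he).ne.symm
      · exact ⟨Sum.inl a, by simpa using ha, Sym2.mem_mk_left a b⟩

lemma ncard_compl_singleton_inl [Finite V] (v₀ : V) :
    ({Sum.inl v₀}ᶜ : Set (V ⊕ G.edgeSet)).ncard = Nat.card V + G.edgeSet.ncard - 1 := by
  rw [Set.ncard_compl, Set.ncard_singleton, Nat.card_sum, Nat.card_coe_set_eq]

lemma tocDomNum_middleGraph_le [Finite V] [Nonempty V] (hG : ∀ v, ∃ u, G.Adj v u) :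
    tocDomNum (middleGraph G) ≤ Nat.card V + G.edgeSet.ncard - 1 := by
  obtain ⟨v₀⟩ := ‹Nonempty V›
  exact ncard_compl_singleton_inl v₀ ▸ tocDomNum_le (isTOCDomSet_compl_singleton_inl hG v₀)

lemma two_mul_ncard_leafSet_le_ncard [Finite V] (hG : G.Connected) (hn : 3 ≤ Nat.card V)
    {D : Set (V ⊕ G.edgeSet)} (hD : IsTOCDomSet (middleGraph G) D) :
    2 * (leafSet G).ncard ≤ D.ncard := by
  have hpendant : Set.range (Sum.inr ∘ pendantEdge (G := G)) ⊆ D := by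
    rintro _ ⟨v, rfl⟩
    exact hD.1.mem_of_neighborSet_eq_singleton (middleGraph_neighborSet_inl_of_mem_leafSet v)
  by_cases hleaves : Sum.inl '' leafSet G ⊆ D
  · have hdisj : Disjoint (Sum.inl '' leafSet G) (Set.range (Sum.inr ∘ pendantEdge (G := G))) := by
      rw [Set.disjoint_left]
      rintro _ ⟨v, -, rfl⟩ ⟨w, hw⟩
      exact Sum.inr_ne_inl hw
    calc 2 * (leafSet G).ncard
        = (Sum.inl '' leafSet G ∪ Set.range (Sum.inr ∘ pendantEdge (G := G))).ncard := by
          rw [Set.ncard_union_eq hdisj, Set.ncard_image_of_injective _ Sum.inl_injective,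
            Set.ncard_range_of_injective (Sum.inr_injective.comp (pendantEdge_injective hG hn)),
            Nat.card_coe_set_eq, two_mul]
      _ ≤ D.ncard := Set.ncard_le_ncard (Set.union_subset hleaves hpendant)
  · obtain ⟨_, ⟨v, hv, rfl⟩, hvD⟩ := Set.not_subset.mp hleaves
    have hDc : Dᶜ = {Sum.inl v} := by
      refine eq_singleton_of_induce_connected hD.2 hvD ?_
      rw [middleGraph_neighborSet_inl_of_mem_leafSet ⟨v, hv⟩, Set.disjoint_singleton_left, Set.notMem_compl_iff]
      exact hpendant ⟨⟨v, hv⟩, rfl⟩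
    rw [← compl_compl D, hDc, ncard_compl_singleton_inl]
    have := ncard_leafSet_lt hG hn
    have := ncard_leafSet_le_ncard_edgeSet hG hn
    omega

lemma two_mul_ncard_leafSet_le_tocDomNum [Finite V] (hG : G.Connected) (hn : 3 ≤ Nat.card V) :
    2 * (leafSet G).ncard ≤ tocDomNum (middleGraph G) := by
  have : Nontrivial V := Finite.one_lt_card_iff_nontrivial.mp (by omega)
  obtain ⟨v₀⟩ := hG.nonempty
  exact le_tocDomNum
    ⟨_, isTOCDomSet_compl_singleton_inl hG.preconnected.exists_adj_of_nontrivial v₀⟩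
    fun _ hD => two_mul_ncard_leafSet_le_ncard hG hn hD

end MiddleGraph

theorem stmt19 {V : Type*} [Fintype V] (G : SimpleGraph V) (hG : G.Connected)
    (hGc : Gᶜ.Connected) (hn : 4 ≤ Fintype.card V) :
    2 * (leafSet G).ncard + 2 * (leafSet Gᶜ).ncard ≤
        tocDomNum (middleGraph G) + tocDomNum (middleGraph Gᶜ) ∧
      tocDomNum (middleGraph G) + tocDomNum (middleGraph Gᶜ) ≤
        (Fintype.card V ^ 2 + 3 * Fintype.card V - 4) / 2 := by
  rw [← Nat.card_eq_fintype_card] at hn ⊢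
  refine ⟨add_le_add (two_mul_ncard_leafSet_le_tocDomNum hG (by omega))
    (two_mul_ncard_leafSet_le_tocDomNum hGc (by omega)), ?_⟩
  have : Nontrivial V := Finite.one_lt_card_iff_nontrivial.mp (by omega)
  have hup := tocDomNum_middleGraph_le hG.preconnected.exists_adj_of_nontrivial
  have hupc := tocDomNum_middleGraph_le hGc.preconnected.exists_adj_of_nontrivial
  have hedges := ncard_edgeSet_add_ncard_edgeSet_compl G
  have hsq : Nat.card V ^ 2 = 2 * (Nat.card V).choose 2 + Nat.card V := by
    obtain ⟨k, hk⟩ : ∃ k, Nat.card V = k + 1 := ⟨_, (Nat.succ_pred_eq_of_pos (by omega)).symm⟩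
    rw [hk, Nat.choose_two_right, Nat.two_mul_div_two_of_even (Nat.even_mul_pred_self _),
      Nat.add_sub_cancel]
    ring
  omega
end
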